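/- Let p ∈ [1,∞) and let f : ℝ² → ℂ be a finite ℂ-linear combination of the functions U_{m,n} with m,n ∈ ℤ, 3 ∣ m+n (respectively, of the functions V_{m,n} with m,n ∈ ℤ, 3 ∣ m+n, m ≠ 2n, n ≠ 2m). Then ∫_𝒫 |f(x)|^p dx = 18 ∫_𝒯 |f(x)|^p dx, where 𝒫 := {a·(1,0) + b·(1/2,√3/2) : 0 < a < 3, 0 < b < 3} is the Pinsky parallelogram and 𝒯 := {(x,y) ∈ ℝ² : 0 < x < 1, 0 < y < √3·x, y < √3·(1−x)} is the open equilateral triangle. -/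

import Mathlib

open MeasureTheory Real

noncomputable section

/-- The open equilateral triangle. -/
def Tri : Set (ℝ × ℝ) :=
  {p | 0 < p.1 ∧ p.1 < 1 ∧ 0 < p.2 ∧ p.2 < Real.sqrt 3 * p.1 ∧ p.2 < Real.sqrt 3 * (1 - p.1)}

/-- The Pinsky parallelogram `𝒫 = {a·(1,0) + b·(1/2,√3/2) : 0 < a,b < 3}`. -/
def Pins : Set (ℝ × ℝ) :=
  {x | ∃ a b : ℝ, 0 < a ∧ a < 3 ∧ 0 < b ∧ b < 3 ∧
    x = (a + b * (1 / 2), b * (Real.sqrt 3 / 2))}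

/-- The frequency vector `k_{m,n}`. -/
def kvec (m n : ℤ) : ℝ × ℝ :=
  (2 * Real.pi / 3 * m, 2 * Real.pi / 3 * ((2 * (n : ℝ) - m) / Real.sqrt 3))

/-- The exponential `e_{m,n}(x) = exp(i k_{m,n} · x)`. -/
def efun (m n : ℤ) (x : ℝ × ℝ) : ℂ :=
  Complex.exp (Complex.I * ((((kvec m n).1 * x.1 + (kvec m n).2 * x.2 : ℝ)) : ℂ))

/-- The Neumann trigonometric eigenfunction `U_{m,n}`. -/
def Ufun (m n : ℤ) (x : ℝ × ℝ) : ℂ :=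
  efun m n x + efun m (m - n) x + efun (-n) (m - n) x + efun (-n) (-m) x
    + efun (n - m) (-m) x + efun (n - m) n x

/-- The Dirichlet trigonometric eigenfunction `V_{m,n}`. -/
def Vfun (m n : ℤ) (x : ℝ × ℝ) : ℂ :=
  efun m n x - efun m (m - n) x + efun (-n) (m - n) x - efun (-n) (-m) x
    + efun (n - m) (-m) x - efun (n - m) n x

/-- The set of Neumann eigenfunctions `U_{m,n}` with `3 ∣ m+n`. -/
def NeumannFamily : Set ((ℝ × ℝ) → ℂ) :=
  {g | ∃ m n : ℤ, (3 : ℤ) ∣ m + n ∧ g = Ufun m n}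

/-- The set of Dirichlet eigenfunctions `V_{m,n}` with `3 ∣ m+n`, `m ≠ 2n`, `n ≠ 2m`. -/
def DirichletFamily : Set ((ℝ × ℝ) → ℂ) :=
  {g | ∃ m n : ℤ, (3 : ℤ) ∣ m + n ∧ m ≠ 2 * n ∧ n ≠ 2 * m ∧ g = Vfun m n}

/-!
In lattice coordinates `(a, b) ↦ a • (1, 0) + b • ω` the parallelogram becomes the square
`(0, 3)²`, the triangle becomes `{a, b > 0, a + b < 1}` (Jacobian `√3 / 2` for both), and
`e_{m,n}` becomes `exp (2πi (m a + n b) / 3)`. When `3 ∣ m + n`, the six exponentials of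
`U_{m,n}` and `V_{m,n}` are permuted by the rotation `(a, b) ↦ (-a - b, a)` and the reflection
`(a, b) ↦ (1 - b, 1 - a)` and are invariant under the translations by `(i, j)` with `3 ∣ i - j`;
so `|f|` is invariant under the group these generate (for `V` the reflection only flips the sign).
Up to null grid lines the square is the disjoint union of the 18 triangles cut out by the lines
`a, b, a + b ∈ ℤ`, and each of them is the image of the basic triangle under an element of this
group, which preserves Lebesgue measure.
-/

open Set
open scoped ENNReal

lemma lintegral_image_affine {E : Type*} [NormedAddCommGroup E] [NormedSpace ℝ E]
    [FiniteDimensional ℝ E] [MeasurableSpace E] [BorelSpace E] (μ : Measure E)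
    [μ.IsAddHaarMeasure] (A : E →L[ℝ] E) (hA : A.det ≠ 0) (c : E) {s : Set E}
    (hs : MeasurableSet s) (F : E → ℝ≥0∞) :
    ∫⁻ x in (fun x => A x + c) '' s, F x ∂μ
      = ENNReal.ofReal |A.det| * ∫⁻ x in s, F (A x + c) ∂μ := by
  have hinj : Function.Injective A :=
    (Module.End.isUnit_iff _).1 ((LinearMap.isUnit_iff_isUnit_det _).2 hA.isUnit) |>.1
  rw [lintegral_image_eq_lintegral_abs_det_fderiv_mul μ hs
    (fun x _ => (A.hasFDerivAt.add_const c).hasFDerivWithinAt)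
    ((add_left_injective c).comp hinj).injOn, lintegral_const_mul' _ _ ENNReal.ofReal_ne_top]

def planeLinear (a b c d : ℝ) : (ℝ × ℝ) →L[ℝ] ℝ × ℝ :=
  (a • ContinuousLinearMap.fst ℝ ℝ ℝ + b • ContinuousLinearMap.snd ℝ ℝ ℝ).prod
    (c • ContinuousLinearMap.fst ℝ ℝ ℝ + d • ContinuousLinearMap.snd ℝ ℝ ℝ)

lemma planeLinear_apply (a b c d : ℝ) (x : ℝ × ℝ) :
    planeLinear a b c d x = (a * x.1 + b * x.2, c * x.1 + d * x.2) := rfl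

lemma det_planeLinear (a b c d : ℝ) : (planeLinear a b c d).det = a * d - b * c := by
  rw [ContinuousLinearMap.det, ← LinearMap.det_toMatrix (Module.Basis.finTwoProd ℝ),
    Matrix.det_fin_two]
  simp [LinearMap.toMatrix_apply, planeLinear_apply]

lemma lintegral_image_plane {g : ℝ × ℝ → ℝ × ℝ} {a b c d e f : ℝ}
    (hg : ∀ x, g x = (a * x.1 + b * x.2 + e, c * x.1 + d * x.2 + f)) (hdet : a * d - b * c ≠ 0)
    {s : Set (ℝ × ℝ)} (hs : MeasurableSet s) (F : ℝ × ℝ → ℝ≥0∞) :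
    ∫⁻ x in g '' s, F x = ENNReal.ofReal |a * d - b * c| * ∫⁻ x in s, F (g x) := by
  have : g = fun x => planeLinear a b c d x + (e, f) := funext hg
  subst this
  rw [← det_planeLinear] at hdet ⊢
  exact lintegral_image_affine volume _ hdet _ hs F

lemma addHaar_levelSet_eq_zero {E : Type*} [NormedAddCommGroup E] [NormedSpace ℝ E]
    [FiniteDimensional ℝ E] [MeasurableSpace E] [BorelSpace E] (μ : Measure E)
    [μ.IsAddHaarMeasure] {ℓ : E →ₗ[ℝ] ℝ} (hℓ : ℓ ≠ 0) (c : ℝ) :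
    μ {x | ℓ x = c} = 0 := by
  have hset : {x | ℓ x = c} = ((affineSpan ℝ {c}).comap ℓ.toAffineMap : Set E) := by
    ext x; simp
  rw [hset]
  refine Measure.addHaar_affineSubspace μ _ fun htop => hℓ (LinearMap.ext fun x => ?_)
  have hmem (y : E) : ℓ y = c := by
    have : y ∈ ((affineSpan ℝ {c}).comap ℓ.toAffineMap : Set E) := by simp [htop]
    rwa [← hset] at this
  rw [LinearMap.zero_apply, hmem x, ← hmem 0, map_zero]

def upTri (i j : ℤ) : Set (ℝ × ℝ) := {p | i < p.1 ∧ j < p.2 ∧ p.1 + p.2 < i + j + 1}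

def downTri (i j : ℤ) : Set (ℝ × ℝ) :=
  {p | p.1 < i + 1 ∧ p.2 < j + 1 ∧ i + j + 1 < p.1 + p.2}

def tri : ℤ × ℤ × Bool → Set (ℝ × ℝ)
  | (i, j, true) => upTri i j
  | (i, j, false) => downTri i j

def triIndex (p : ℝ × ℝ) : ℤ × ℤ × Bool :=
  (⌊p.1⌋, ⌊p.2⌋, decide (p.1 + p.2 < ⌊p.1⌋ + ⌊p.2⌋ + 1))

lemma measurableSet_tri (z : ℤ × ℤ × Bool) : MeasurableSet (tri z) := by
  obtain ⟨i, j, _ | _⟩ := z <;> simp only [tri, upTri, downTri, ofPred_and] <;>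
  exact (measurableSet_lt (by fun_prop) (by fun_prop)).inter
    ((measurableSet_lt (by fun_prop) (by fun_prop)).inter
      (measurableSet_lt (by fun_prop) (by fun_prop)))

lemma tri_subset_cell (z : ℤ × ℤ × Bool) :
    tri z ⊆ Ioo (z.1 : ℝ) (z.1 + 1) ×ˢ Ioo (z.2.1 : ℝ) (z.2.1 + 1) := by
  obtain ⟨i, j, _ | _⟩ := z <;> rintro p ⟨h₁, h₂, h₃⟩ <;>
    exact ⟨⟨by linarith, by linarith⟩, by linarith, by linarith⟩

lemma triIndex_eq_of_mem {z : ℤ × ℤ × Bool} {p : ℝ × ℝ} (hp : p ∈ tri z) :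
    triIndex p = z := by
  obtain ⟨⟨hx₁, hx₂⟩, hy₁, hy₂⟩ := tri_subset_cell z hp
  have hx : ⌊p.1⌋ = z.1 := Int.floor_eq_iff.2 ⟨hx₁.le, hx₂⟩
  have hy : ⌊p.2⌋ = z.2.1 := Int.floor_eq_iff.2 ⟨hy₁.le, hy₂⟩
  obtain ⟨i, j, _ | _⟩ := z <;> obtain ⟨-, -, h⟩ := hp
  · simp [triIndex, hx, hy, not_lt.2 h.le]
  · simp [triIndex, hx, hy, h]

lemma pairwise_disjoint_tri : Pairwise (Function.onFun Disjoint tri) := fun _ _ hne =>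
  disjoint_left.2 fun _ hp hp' => hne ((triIndex_eq_of_mem hp).symm.trans (triIndex_eq_of_mem hp'))

def gridLines : Set (ℝ × ℝ) :=
  ⋃ k : ℤ, {p | p.1 = k} ∪ {p | p.2 = k} ∪ {p | p.1 + p.2 = k}

lemma mem_tri_triIndex {p : ℝ × ℝ} (hp : p ∉ gridLines) : p ∈ tri (triIndex p) := by
  simp only [gridLines, mem_iUnion, mem_union, mem_ofPred_eq, not_exists, not_or] at hp
  have hx : (⌊p.1⌋ : ℝ) < p.1 := (Int.floor_le _).lt_of_ne fun h => (hp _).1.1 h.symm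
  have hy : (⌊p.2⌋ : ℝ) < p.2 := (Int.floor_le _).lt_of_ne fun h => (hp _).1.2 h.symm
  have hx' := Int.lt_floor_add_one p.1
  have hy' := Int.lt_floor_add_one p.2
  by_cases h : p.1 + p.2 < ⌊p.1⌋ + ⌊p.2⌋ + 1
  · rw [show triIndex p = (⌊p.1⌋, ⌊p.2⌋, true) by simp [triIndex, h]]
    exact ⟨hx, hy, h⟩
  · have hne := (hp (⌊p.1⌋ + ⌊p.2⌋ + 1)).2
    push_cast at hne
    rw [show triIndex p = (⌊p.1⌋, ⌊p.2⌋, false) by simp [triIndex, h]]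
    exact ⟨hx', hy', lt_of_le_of_ne (not_lt.1 h) (Ne.symm hne)⟩

lemma volume_gridLines : volume gridLines = 0 := by
  have fst_ne : LinearMap.fst ℝ ℝ ℝ ≠ 0 := fun h => by
    simpa using LinearMap.congr_fun h (1, 0)
  have snd_ne : LinearMap.snd ℝ ℝ ℝ ≠ 0 := fun h => by
    simpa using LinearMap.congr_fun h (0, 1)
  have sum_ne : LinearMap.fst ℝ ℝ ℝ + LinearMap.snd ℝ ℝ ℝ ≠ 0 := fun h => by
    simpa using LinearMap.congr_fun h (1, 0)
  refine measure_iUnion_null fun k => measure_union_null (measure_union_null ?_ ?_) ?_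
  · exact addHaar_levelSet_eq_zero volume fst_ne k
  · exact addHaar_levelSet_eq_zero volume snd_ne k
  · exact addHaar_levelSet_eq_zero volume sum_ne k

def triBox (n : ℕ) : Finset (ℤ × ℤ × Bool) :=
  Finset.Ico 0 (n : ℤ) ×ˢ Finset.Ico 0 (n : ℤ) ×ˢ Finset.univ

lemma biUnion_tri_subset_square (n : ℕ) :
    ⋃ z ∈ triBox n, tri z ⊆ Ioo (0 : ℝ) n ×ˢ Ioo (0 : ℝ) n := by
  refine iUnion₂_subset fun z hz p hp => ?_
  simp only [triBox, Finset.mem_product, Finset.mem_Ico, Finset.mem_univ, and_true] at hz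
  obtain ⟨⟨hx₁, hx₂⟩, hy₁, hy₂⟩ := tri_subset_cell z hp
  have h₁ : (0 : ℝ) ≤ z.1 := by exact_mod_cast hz.1.1
  have h₂ : (z.1 : ℝ) + 1 ≤ n := by exact_mod_cast hz.1.2
  have h₃ : (0 : ℝ) ≤ z.2.1 := by exact_mod_cast hz.2.1
  have h₄ : (z.2.1 : ℝ) + 1 ≤ n := by exact_mod_cast hz.2.2
  exact ⟨⟨by linarith, by linarith⟩, by linarith, by linarith⟩

lemma square_diff_biUnion_tri_subset (n : ℕ) :
    Ioo (0 : ℝ) n ×ˢ Ioo (0 : ℝ) n \ ⋃ z ∈ triBox n, tri z ⊆ gridLines := by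
  rintro p ⟨⟨⟨hx₁, hx₂⟩, hy₁, hy₂⟩, hp⟩
  by_contra hgrid
  refine hp (mem_biUnion ?_ (mem_tri_triIndex hgrid))
  simp only [Finset.mem_coe, triBox, triIndex, Finset.mem_product, Finset.mem_Ico,
    Finset.mem_univ, and_true, Int.floor_nonneg, Int.floor_lt]
  exact ⟨⟨hx₁.le, mod_cast hx₂⟩, hy₁.le, mod_cast hy₂⟩

lemma square_ae_eq_biUnion_tri (n : ℕ) :
    (Ioo (0 : ℝ) n ×ˢ Ioo (0 : ℝ) n) =ᵐ[volume] ⋃ z ∈ triBox n, tri z :=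
  ae_eq_set.2 ⟨measure_mono_null (square_diff_biUnion_tri_subset n) volume_gridLines,
    by rw [sdiff_eq_empty.2 (biUnion_tri_subset_square n), measure_empty]⟩
structure TriangleGroupInvariant {α : Type*} (F : ℝ × ℝ → α) : Prop where
  translate : ∀ i j : ℤ, 3 ∣ i - j → ∀ x : ℝ × ℝ, F (x.1 + i, x.2 + j) = F x
  rotate : ∀ x : ℝ × ℝ, F (-x.1 - x.2, x.1) = F x
  reflect : ∀ x : ℝ × ℝ, F (1 - x.2, 1 - x.1) = F x

lemma setLIntegral_image_eq_of_comp_eq {g : ℝ × ℝ → ℝ × ℝ} {a b c d e f : ℝ}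
    (hg : ∀ x, g x = (a * x.1 + b * x.2 + e, c * x.1 + d * x.2 + f)) (hdet : |a * d - b * c| = 1)
    {F : ℝ × ℝ → ℝ≥0∞} (hF : ∀ x, F (g x) = F x) {s : Set (ℝ × ℝ)}
    (hs : MeasurableSet s) :
    ∫⁻ x in g '' s, F x = ∫⁻ x in s, F x := by
  rw [lintegral_image_plane hg (abs_ne_zero.1 (hdet.trans_ne one_ne_zero)) hs, hdet,
    ENNReal.ofReal_one, one_mul]
  simp only [hF]

lemma image_translate_upTri (i j a b : ℤ) :
    (fun x : ℝ × ℝ => (x.1 + a, x.2 + b)) '' upTri i j = upTri (i + a) (j + b) := by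
  ext ⟨x, y⟩
  simp only [upTri, mem_image, mem_ofPred_eq, Prod.mk.injEq, Prod.exists, Int.cast_add]
  constructor
  · rintro ⟨u, v, ⟨h₁, h₂, h₃⟩, rfl, rfl⟩
    exact ⟨by linarith, by linarith, by linarith⟩
  · rintro ⟨h₁, h₂, h₃⟩
    exact ⟨x - a, y - b, ⟨by linarith, by linarith, by linarith⟩, by ring, by ring⟩

lemma image_rotate_upTri (i j : ℤ) :
    (fun x : ℝ × ℝ => (-x.1 - x.2, x.1)) '' upTri i j = upTri (-i - j - 1) i := by
  ext ⟨x, y⟩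
  simp only [upTri, mem_image, mem_ofPred_eq, Prod.mk.injEq, Prod.exists]
  push_cast
  constructor
  · rintro ⟨u, v, ⟨h₁, h₂, h₃⟩, rfl, rfl⟩
    exact ⟨by linarith, by linarith, by linarith⟩
  · rintro ⟨h₁, h₂, h₃⟩
    exact ⟨-x - y, ⟨h₂, by linarith, by linarith⟩, by ring, rfl⟩

lemma image_reflect_upTri (i j : ℤ) :
    (fun x : ℝ × ℝ => (1 - x.2, 1 - x.1)) '' upTri i j = downTri (-j) (-i) := by
  ext ⟨x, y⟩
  simp only [upTri, downTri, mem_image, mem_ofPred_eq, Prod.mk.injEq, Prod.exists]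
  push_cast
  constructor
  · rintro ⟨u, v, ⟨h₁, h₂, h₃⟩, rfl, rfl⟩
    exact ⟨by linarith, by linarith, by linarith⟩
  · rintro ⟨h₁, h₂, h₃⟩
    exact ⟨1 - y, 1 - x, ⟨by linarith, by linarith, by linarith⟩, by ring, by ring⟩

lemma measurableSet_upTri (i j : ℤ) : MeasurableSet (upTri i j) := measurableSet_tri (i, j, true)

section Tiles

variable {F : ℝ × ℝ → ℝ≥0∞} (hF : TriangleGroupInvariant F)
include hF

lemma setLIntegral_upTri_of_dvd {i j : ℤ} (h : 3 ∣ i - j) :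
    ∫⁻ x in upTri i j, F x = ∫⁻ x in upTri 0 0, F x := by
  rw [← zero_add i, ← zero_add j, ← image_translate_upTri,
    setLIntegral_image_eq_of_comp_eq (a := 1) (b := 0) (c := 0) (d := 1) (e := i) (f := j)
      (fun x => Prod.ext (by ring) (by ring)) (by norm_num) (hF.translate i j h)
      (measurableSet_upTri 0 0)]

lemma setLIntegral_upTri_rotate (i j : ℤ) :
    ∫⁻ x in upTri (-i - j - 1) i, F x = ∫⁻ x in upTri i j, F x := by
  rw [← image_rotate_upTri,
    setLIntegral_image_eq_of_comp_eq (a := -1) (b := -1) (c := 1) (d := 0) (e := 0) (f := 0)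
      (fun x => Prod.ext (by ring) (by ring)) (by norm_num) hF.rotate (measurableSet_upTri i j)]

lemma setLIntegral_upTri (i j : ℤ) : ∫⁻ x in upTri i j, F x = ∫⁻ x in upTri 0 0, F x := by
  obtain h | h | h : 3 ∣ i - j ∨ 3 ∣ i - j - 1 ∨ 3 ∣ i - j - 2 := by omega
  · exact setLIntegral_upTri_of_dvd hF h
  · rw [← setLIntegral_upTri_rotate hF]
    exact setLIntegral_upTri_of_dvd hF (by omega)
  · rw [← setLIntegral_upTri_rotate hF, ← setLIntegral_upTri_rotate hF]
    exact setLIntegral_upTri_of_dvd hF (by omega)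

lemma setLIntegral_downTri (i j : ℤ) :
    ∫⁻ x in downTri i j, F x = ∫⁻ x in upTri 0 0, F x := by
  rw [← neg_neg i, ← neg_neg j, ← image_reflect_upTri,
    setLIntegral_image_eq_of_comp_eq (a := 0) (b := -1) (c := -1) (d := 0) (e := 1) (f := 1)
      (fun x => Prod.ext (by ring) (by ring)) (by norm_num) hF.reflect (measurableSet_upTri _ _),
    setLIntegral_upTri hF]

lemma setLIntegral_tri (z : ℤ × ℤ × Bool) :
    ∫⁻ x in tri z, F x = ∫⁻ x in upTri 0 0, F x := by
  obtain ⟨i, j, _ | _⟩ := z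
  · exact setLIntegral_downTri hF i j
  · exact setLIntegral_upTri hF i j

lemma setLIntegral_square (n : ℕ) :
    ∫⁻ x in Ioo (0 : ℝ) n ×ˢ Ioo (0 : ℝ) n, F x
      = 2 * n ^ 2 * ∫⁻ x in upTri 0 0, F x := by
  rw [setLIntegral_congr (square_ae_eq_biUnion_tri n),
    lintegral_biUnion_finset (pairwise_disjoint_tri.set_pairwise _)
      (fun z _ => measurableSet_tri z),
    Finset.sum_congr rfl (fun z _ => setLIntegral_tri hF z), Finset.sum_const, nsmul_eq_mul]
  congr 1
  simp [triBox]
  ring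

end Tiles

def latticeChar (m n : ℤ) (x : ℝ × ℝ) : ℂ :=
  Complex.exp (2 * π * Complex.I * (m * x.1 + n * x.2) / 3)

def latticeToPlane (x : ℝ × ℝ) : ℝ × ℝ := (x.1 + x.2 * (1 / 2), x.2 * (√3 / 2))

lemma efun_latticeToPlane (m n : ℤ) (x : ℝ × ℝ) :
    efun m n (latticeToPlane x) = latticeChar m n x := by
  have h3 : √3 ≠ 0 := by positivity
  simp only [efun, kvec, latticeToPlane, latticeChar]
  congr 1
  push_cast
  field_simp
  ring

lemma latticeChar_add_int (m n i j : ℤ) (h : 3 ∣ m * i + n * j) (x : ℝ × ℝ) :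
    latticeChar m n (x.1 + i, x.2 + j) = latticeChar m n x := by
  obtain ⟨k, hk⟩ := h
  have hk' : (m : ℂ) * i + n * j = 3 * k := by exact_mod_cast hk
  rw [latticeChar, latticeChar, Complex.exp_eq_exp_iff_exists_int]
  exact ⟨k, by push_cast; linear_combination (2 * π * Complex.I / 3) * hk'⟩

lemma latticeChar_rotate (m n : ℤ) (x : ℝ × ℝ) :
    latticeChar m n (-x.1 - x.2, x.1) = latticeChar (n - m) (-m) x := by
  simp only [latticeChar]
  push_cast
  ring_nf

lemma latticeChar_reflect (m n : ℤ) (h : 3 ∣ m + n) (x : ℝ × ℝ) :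
    latticeChar m n (1 - x.2, 1 - x.1) = latticeChar (-n) (-m) x := by
  obtain ⟨k, hk⟩ := h
  have hk' : (m : ℂ) + n = 3 * k := by exact_mod_cast hk
  rw [latticeChar, latticeChar, Complex.exp_eq_exp_iff_exists_int]
  exact ⟨k, by push_cast; linear_combination (2 * π * Complex.I / 3) * hk'⟩

structure TriangleGroupSemiInvariant (ε : ℂ) (u : ℝ × ℝ → ℂ) : Prop where
  translate : ∀ i j : ℤ, 3 ∣ i - j → ∀ x : ℝ × ℝ, u (x.1 + i, x.2 + j) = u x
  rotate : ∀ x : ℝ × ℝ, u (-x.1 - x.2, x.1) = u x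
  reflect : ∀ x : ℝ × ℝ, u (1 - x.2, 1 - x.1) = ε * u x

def orbitSum (ε : ℂ) (m n : ℤ) (x : ℝ × ℝ) : ℂ :=
  latticeChar m n x + ε * latticeChar m (m - n) x + latticeChar (-n) (m - n) x
    + ε * latticeChar (-n) (-m) x + latticeChar (n - m) (-m) x + ε * latticeChar (n - m) n x

lemma orbitSum_semiInvariant {ε : ℂ} (hε : ε ^ 2 = 1) {m n : ℤ} (h : 3 ∣ m + n) :
    TriangleGroupSemiInvariant ε (orbitSum ε m n) where
  translate i j hij x := by
    have key (a b : ℤ) (hab : 3 ∣ a + b) : 3 ∣ a * i + b * j := by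
      rw [show a * i + b * j = a * (i - j) + (a + b) * j by ring]
      exact dvd_add (dvd_mul_of_dvd_right hij a) (dvd_mul_of_dvd_left hab j)
    simp (disch := exact key _ _ (by omega)) only [orbitSum, latticeChar_add_int]
  rotate x := by
    simp only [orbitSum, latticeChar_rotate]
    ring_nf
  reflect x := by
    simp (disch := omega) only [orbitSum, latticeChar_reflect]
    ring_nf
    rw [hε]
    ring

lemma Ufun_comp_latticeToPlane (m n : ℤ) : Ufun m n ∘ latticeToPlane = orbitSum 1 m n := by
  ext x
  simp [Ufun, orbitSum, efun_latticeToPlane]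

lemma Vfun_comp_latticeToPlane (m n : ℤ) : Vfun m n ∘ latticeToPlane = orbitSum (-1) m n := by
  ext x
  simp only [Function.comp_apply, Vfun, orbitSum, efun_latticeToPlane]
  ring

def semiInvariantSubmodule (ε : ℂ) : Submodule ℂ (ℝ × ℝ → ℂ) where
  carrier := {u | TriangleGroupSemiInvariant ε u}
  add_mem' hu hv := ⟨fun i j h x => by simp [hu.translate i j h x, hv.translate i j h x],
    fun x => by simp [hu.rotate x, hv.rotate x],
    fun x => by simp [hu.reflect x, hv.reflect x, mul_add]⟩
  zero_mem' := ⟨by simp, by simp, by simp⟩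
  smul_mem' c u hu := ⟨fun i j h x => by simp [hu.translate i j h x],
    fun x => by simp [hu.rotate x], fun x => by simp [hu.reflect x, mul_left_comm]⟩

lemma semiInvariant_comp_latticeToPlane_of_mem_span {s : Set (ℝ × ℝ → ℂ)} {ε : ℂ}
    (hε : ε ^ 2 = 1)
    (hs : ∀ u ∈ s, ∃ m n : ℤ, 3 ∣ m + n ∧ u ∘ latticeToPlane = orbitSum ε m n)
    {f : ℝ × ℝ → ℂ} (hf : f ∈ Submodule.span ℂ s) :
    TriangleGroupSemiInvariant ε (f ∘ latticeToPlane) := by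
  refine Submodule.span_le (p := (semiInvariantSubmodule ε).comap
    (LinearMap.funLeft ℂ ℂ latticeToPlane)) |>.2 (fun u hu => ?_) hf
  obtain ⟨m, n, hmn, hu⟩ := hs u hu
  show TriangleGroupSemiInvariant ε (u ∘ latticeToPlane)
  exact hu ▸ orbitSum_semiInvariant hε hmn

lemma TriangleGroupSemiInvariant.invariant_comp_norm {ε : ℂ} {u : ℝ × ℝ → ℂ}
    (hu : TriangleGroupSemiInvariant ε u) (hε : ‖ε‖ = 1) {α : Type*} (φ : ℝ → α) :
    TriangleGroupInvariant (fun x => φ ‖u x‖) where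
  translate i j h x := by rw [hu.translate i j h x]
  rotate x := by rw [hu.rotate x]
  reflect x := by rw [hu.reflect x, norm_mul, hε, one_mul]

lemma exists_semiInvariant_of_mem_span {f : ℝ × ℝ → ℂ}
    (hf : f ∈ Submodule.span ℂ NeumannFamily ∨ f ∈ Submodule.span ℂ DirichletFamily) :
    ∃ ε : ℂ, ‖ε‖ = 1 ∧ TriangleGroupSemiInvariant ε (f ∘ latticeToPlane) := by
  rcases hf with hf | hf
  · refine ⟨1, norm_one, semiInvariant_comp_latticeToPlane_of_mem_span (by norm_num) ?_ hf⟩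
    rintro _ ⟨m, n, hmn, rfl⟩
    exact ⟨m, n, hmn, Ufun_comp_latticeToPlane m n⟩
  · refine ⟨-1, by simp, semiInvariant_comp_latticeToPlane_of_mem_span (by norm_num) ?_ hf⟩
    rintro _ ⟨m, n, hmn, -, -, rfl⟩
    exact ⟨m, n, hmn, Vfun_comp_latticeToPlane m n⟩

lemma continuous_of_mem_span {f : ℝ × ℝ → ℂ}
    (hf : f ∈ Submodule.span ℂ NeumannFamily ∨ f ∈ Submodule.span ℂ DirichletFamily) :
    Continuous f := by
  rcases hf with hf | hf <;> refine Submodule.span_le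
    (p := continuousSubmodule (ℝ × ℝ) ℂ ℂ) |>.2 (fun u hu => ?_) hf
  · obtain ⟨m, n, -, rfl⟩ := hu
    show Continuous (Ufun m n)
    unfold Ufun efun
    fun_prop
  · obtain ⟨m, n, -, -, -, rfl⟩ := hu
    show Continuous (Vfun m n)
    unfold Vfun efun
    fun_prop

lemma latticeToPlane_eq (x : ℝ × ℝ) :
    latticeToPlane x = (1 * x.1 + 1 / 2 * x.2 + 0, 0 * x.1 + √3 / 2 * x.2 + 0) := by
  simp only [latticeToPlane, Prod.mk.injEq]
  constructor <;> ring

lemma Pins_eq_image : Pins = latticeToPlane '' (Ioo 0 3 ×ˢ Ioo 0 3) := by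
  ext x
  simp only [Pins, latticeToPlane, mem_image, mem_prod, mem_Ioo, Prod.exists, mem_ofPred_eq]
  constructor
  · rintro ⟨a, b, h₁, h₂, h₃, h₄, rfl⟩
    exact ⟨a, b, ⟨⟨h₁, h₂⟩, h₃, h₄⟩, rfl⟩
  · rintro ⟨a, b, ⟨⟨h₁, h₂⟩, h₃, h₄⟩, rfl⟩
    exact ⟨a, b, h₁, h₂, h₃, h₄, rfl⟩

lemma Tri_eq_image : Tri = latticeToPlane '' upTri 0 0 := by
  have hs : (0 : ℝ) < √3 := by positivity
  ext ⟨x, y⟩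
  simp only [Tri, upTri, latticeToPlane, mem_image, Prod.exists, Prod.mk.injEq, mem_ofPred_eq,
    Int.cast_zero, zero_add]
  constructor
  · rintro ⟨h₁, h₂, h₃, h₄, h₅⟩
    refine ⟨x - y / √3, 2 * y / √3, ⟨?_, by positivity, ?_⟩, by field_simp; ring,
      by field_simp⟩
    · rw [sub_pos, div_lt_iff₀ hs]; linarith
    · rw [show x - y / √3 + 2 * y / √3 = x + y / √3 by ring, ← lt_sub_iff_add_lt',
        div_lt_iff₀ hs]
      linarith
  · rintro ⟨a, b, ⟨h₁, h₂, h₃⟩, rfl, rfl⟩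
    refine ⟨by linarith, by linarith, by positivity, by nlinarith, by nlinarith⟩

lemma setLIntegral_Pins_eq_18_mul {F : ℝ × ℝ → ℝ≥0∞}
    (hF : TriangleGroupInvariant (F ∘ latticeToPlane)) :
    ∫⁻ x in Pins, F x = 18 * ∫⁻ x in Tri, F x := by
  have hdet : (1 : ℝ) * (√3 / 2) - 1 / 2 * 0 ≠ 0 := by norm_num
  have hsquare := setLIntegral_square hF 3
  push_cast at hsquare
  rw [Pins_eq_image, Tri_eq_image,
    lintegral_image_plane latticeToPlane_eq hdet (measurableSet_Ioo.prod measurableSet_Ioo),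
    lintegral_image_plane latticeToPlane_eq hdet (measurableSet_upTri 0 0)]
  simp only [Function.comp_apply] at hsquare
  rw [hsquare]
  ring

theorem integral_pow_parallelogram_eq_18_triangle_general
    (p : ℝ) (f : (ℝ × ℝ) → ℂ)
    (hf : f ∈ Submodule.span ℂ NeumannFamily ∨ f ∈ Submodule.span ℂ DirichletFamily) :
    (∫ x in Pins, ‖f x‖ ^ p) = 18 * ∫ x in Tri, ‖f x‖ ^ p := by
  obtain ⟨ε, hε, hsemi⟩ := exists_semiInvariant_of_mem_span hf
  have hmeas (s : Set (ℝ × ℝ)) :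
      AEStronglyMeasurable (fun x => ‖f x‖ ^ p) (volume.restrict s) :=
    ((continuous_of_mem_span hf).norm.measurable.pow_const p).aestronglyMeasurable
  have hnonneg (s : Set (ℝ × ℝ)) : 0 ≤ᵐ[volume.restrict s] fun x => ‖f x‖ ^ p :=
    ae_of_all _ fun x => by positivity
  rw [integral_eq_lintegral_of_nonneg_ae (hnonneg _) (hmeas _),
    integral_eq_lintegral_of_nonneg_ae (hnonneg _) (hmeas _),
    setLIntegral_Pins_eq_18_mul (F := fun x => ENNReal.ofReal (‖f x‖ ^ p))
      (hsemi.invariant_comp_norm hε fun t => ENNReal.ofReal (t ^ p)),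
    ENNReal.toReal_mul]
  norm_num

/-- For any finite `ℂ`-linear combination `f` of the Neumann eigenfunctions (resp. of the
Dirichlet eigenfunctions) and any `p ∈ [1,∞)`, `∫_𝒫 |f|ᵖ = 18 ∫_𝒯 |f|ᵖ`. -/
theorem integral_pow_parallelogram_eq_18_triangle
    (p : ℝ) (hp : 1 ≤ p) (f : (ℝ × ℝ) → ℂ)
    (hf : f ∈ Submodule.span ℂ NeumannFamily ∨ f ∈ Submodule.span ℂ DirichletFamily) :
    (∫ x in Pins, ‖f x‖ ^ p) = 18 * ∫ x in Tri, ‖f x‖ ^ p :=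
  integral_pow_parallelogram_eq_18_triangle_general p f hf

end
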